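/- Let Γ be a trivalent labeled graph that is a tree with at least one black vertex, all white vertices of genus 0, and all terminal vertices white, and suppose the associated group G(Γ) is trivial. Then Γ contains a terminal vertex whose incident edge has label 1. -/

import Mathlib

namespace Stratifold

/-- A **labeled graph**: a finite bipartite multigraph whose vertices (named by natural
numbers) are partitioned into black and white vertices, every edge (also named by a
natural number) joining a black vertex to a white vertex and carrying a positive integer
label, and every white vertex carrying an integer genus. -/
structure LGraph where
  blacks : Finset ℕ
  whites : Finset ℕ
  edges : Finset ℕ
  bEnd : ℕ → ℕ
  wEnd : ℕ → ℕ
  label : ℕ → ℕ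
  genus : ℕ → ℤ
  disj : Disjoint blacks whites
  bEnd_mem : ∀ e ∈ edges, bEnd e ∈ blacks
  wEnd_mem : ∀ e ∈ edges, wEnd e ∈ whites
  label_pos : ∀ e ∈ edges, 0 < label e

namespace LGraph

/-- The set of all vertices of a labeled graph. -/
def Verts (G : LGraph) : Finset ℕ := G.blacks ∪ G.whites

/-- The edges incident to a vertex. -/
def IncidentEdges (G : LGraph) (v : ℕ) : Finset ℕ :=
  G.edges.filter fun e => G.bEnd e = v ∨ G.wEnd e = v

/-- The degree of a vertex. -/
def deg (G : LGraph) (v : ℕ) : ℕ := (G.IncidentEdges v).card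

/-- Adjacency: two vertices joined by some edge. -/
def Adj (G : LGraph) (u v : ℕ) : Prop :=
  ∃ e ∈ G.edges, (G.bEnd e = u ∧ G.wEnd e = v) ∨ (G.bEnd e = v ∧ G.wEnd e = u)

/-- Reachability by a path of edges. -/
def Reach (G : LGraph) : ℕ → ℕ → Prop := Relation.ReflTransGen G.Adj

/-- The graph is connected (and nonempty). -/
def Connected (G : LGraph) : Prop :=
  G.Verts.Nonempty ∧ ∀ u ∈ G.Verts, ∀ v ∈ G.Verts, G.Reach u v

/-- A (multi)graph is a tree iff it is connected and has exactly one more vertex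
than it has edges. -/
def IsTree (G : LGraph) : Prop := G.Connected ∧ G.edges.card + 1 = G.Verts.card

/-- Trivalent: for every black vertex, the labels of its incident edges sum to `3`. -/
def Trivalent (G : LGraph) : Prop :=
  ∀ b ∈ G.blacks, ∑ e ∈ G.IncidentEdges b, G.label e = 3

/-- All white vertices have genus `0`. -/
def WhitesGenusZero (G : LGraph) : Prop := ∀ w ∈ G.whites, G.genus w = 0

/-- All terminal (degree-one) vertices are white. -/
def TerminalsWhite (G : LGraph) : Prop := ∀ v ∈ G.blacks, G.deg v ≠ 1

/-- The relator associated to a white vertex `w`: the product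
`b(e₁)^{r(e₁)} ⋯ b(eₚ)^{r(eₚ)}` over the edges `e₁ < ⋯ < eₚ` incident to `w`
(in the chosen linear order of the edge names), where `b(e)` is the black endpoint
of `e` and `r(e)` its label. -/
def relator (G : LGraph) (w : ℕ) : FreeGroup {b : ℕ // b ∈ G.blacks} :=
  (((G.edges.filter fun e => G.wEnd e = w).sort (· ≤ ·)).map fun e =>
    if h : G.bEnd e ∈ G.blacks then
      FreeGroup.of (⟨G.bEnd e, h⟩ : {b : ℕ // b ∈ G.blacks}) ^ G.label e
    else 1).prod

/-- The set of relators of `G`: one for each white vertex. -/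
def rels (G : LGraph) : Set (FreeGroup {b : ℕ // b ∈ G.blacks}) :=
  {r | ∃ w ∈ G.whites, r = G.relator w}

/-- The group associated to a labeled graph which is a tree with all white vertices of
genus 0: one generator for each black vertex, one relation for each white vertex. -/
abbrev Grp (G : LGraph) : Type := PresentedGroup G.rels

/-- The generator of `Grp G` corresponding to a black vertex `b`. -/
def gen (G : LGraph) (b : ℕ) (h : b ∈ G.blacks) : G.Grp := PresentedGroup.of ⟨b, h⟩

/-- `G` is the labeled graph consisting of a single white vertex `w` of genus `0`. -/
def IsSingleWhite (G : LGraph) (w : ℕ) : Prop :=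
  G.whites = {w} ∧ G.blacks = ∅ ∧ G.edges = ∅ ∧ G.genus w = 0

/-- `G` is a `b111`-tree: one black vertex joined by three edges of label `1` to three
white vertices of genus `0`. -/
def IsB111 (G : LGraph) : Prop :=
  ∃ b w₁ w₂ w₃ e₁ e₂ e₃ : ℕ,
    G.blacks = {b} ∧ G.whites = {w₁, w₂, w₃} ∧
    w₁ ≠ w₂ ∧ w₁ ≠ w₃ ∧ w₂ ≠ w₃ ∧
    G.edges = {e₁, e₂, e₃} ∧ e₁ ≠ e₂ ∧ e₁ ≠ e₃ ∧ e₂ ≠ e₃ ∧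
    G.bEnd e₁ = b ∧ G.bEnd e₂ = b ∧ G.bEnd e₃ = b ∧
    G.wEnd e₁ = w₁ ∧ G.wEnd e₂ = w₂ ∧ G.wEnd e₃ = w₃ ∧
    G.label e₁ = 1 ∧ G.label e₂ = 1 ∧ G.label e₃ = 1 ∧
    G.genus w₁ = 0 ∧ G.genus w₂ = 0 ∧ G.genus w₃ = 0

/-- Operation `O1` performed at the white vertex `w` of `G`, producing `G'`:
the edges incident to `w` are split into two (possibly empty) sets `E₀` and its
complement; `w` is replaced by two white vertices `w₀`, `w₁` of genus `0` (the edges of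
`E₀` reattached to `w₀`, the others to `w₁`); a new black vertex `b` and a new terminal
white vertex `w₂` of genus `0` are added, together with three new edges of label `1`
joining `b` to `w₀`, to `w₁` and to `w₂`. -/
def O1At (G G' : LGraph) (w : ℕ) : Prop :=
  w ∈ G.whites ∧
  ∃ (E₀ : Finset ℕ) (w₀ w₁ w₂ b f₀ f₁ f₂ : ℕ),
    E₀ ⊆ G.edges.filter (fun e => G.wEnd e = w) ∧
    w₀ ∉ G.Verts ∧ w₁ ∉ G.Verts ∧ w₂ ∉ G.Verts ∧ b ∉ G.Verts ∧
    w₀ ≠ w₁ ∧ w₀ ≠ w₂ ∧ w₁ ≠ w₂ ∧ b ≠ w₀ ∧ b ≠ w₁ ∧ b ≠ w₂ ∧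
    f₀ ∉ G.edges ∧ f₁ ∉ G.edges ∧ f₂ ∉ G.edges ∧ f₀ ≠ f₁ ∧ f₀ ≠ f₂ ∧ f₁ ≠ f₂ ∧
    G'.blacks = insert b G.blacks ∧
    G'.whites = insert w₀ (insert w₁ (insert w₂ (G.whites.erase w))) ∧
    G'.edges = insert f₀ (insert f₁ (insert f₂ G.edges)) ∧
    (∀ e ∈ G.edges, G'.bEnd e = G.bEnd e ∧ G'.label e = G.label e) ∧
    (∀ e ∈ G.edges, G'.wEnd e =
      if G.wEnd e = w then (if e ∈ E₀ then w₀ else w₁) else G.wEnd e) ∧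
    G'.bEnd f₀ = b ∧ G'.bEnd f₁ = b ∧ G'.bEnd f₂ = b ∧
    G'.wEnd f₀ = w₀ ∧ G'.wEnd f₁ = w₁ ∧ G'.wEnd f₂ = w₂ ∧
    G'.label f₀ = 1 ∧ G'.label f₁ = 1 ∧ G'.label f₂ = 1 ∧
    (∀ v ∈ G.whites.erase w, G'.genus v = G.genus v) ∧
    G'.genus w₀ = 0 ∧ G'.genus w₁ = 0 ∧ G'.genus w₂ = 0

/-- Operation `O1` performed at some white vertex. -/
def O1Step (G G' : LGraph) : Prop := ∃ w, O1At G G' w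

/-- Operation `O2` performed at the white vertex `w` of `G`, producing `G'`: a new black
vertex `b` and a new terminal white vertex `w'` of genus `0` are added, together with an
edge of label `2` joining `w` to `b` and an edge of label `1` joining `b` to `w'`. -/
def O2At (G G' : LGraph) (w : ℕ) : Prop :=
  w ∈ G.whites ∧
  ∃ (b w' f₁ f₂ : ℕ),
    b ∉ G.Verts ∧ w' ∉ G.Verts ∧ b ≠ w' ∧
    f₁ ∉ G.edges ∧ f₂ ∉ G.edges ∧ f₁ ≠ f₂ ∧
    G'.blacks = insert b G.blacks ∧
    G'.whites = insert w' G.whites ∧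
    G'.edges = insert f₁ (insert f₂ G.edges) ∧
    (∀ e ∈ G.edges, G'.bEnd e = G.bEnd e ∧ G'.wEnd e = G.wEnd e ∧ G'.label e = G.label e) ∧
    G'.bEnd f₁ = b ∧ G'.wEnd f₁ = w ∧ G'.label f₁ = 2 ∧
    G'.bEnd f₂ = b ∧ G'.wEnd f₂ = w' ∧ G'.label f₂ = 1 ∧
    (∀ v ∈ G.whites, G'.genus v = G.genus v) ∧
    G'.genus w' = 0

/-- Operation `O2` performed at some white vertex. -/
def O2Step (G G' : LGraph) : Prop := ∃ w, O2At G G' w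

/-- Two labeled graphs are disjoint: no common vertices and no common edges. -/
def DisjGraphs (G₁ G₂ : LGraph) : Prop :=
  Disjoint G₁.Verts G₂.Verts ∧ Disjoint G₁.edges G₂.edges

/-- Operation `O1*` on disjoint labeled graphs `G₁`, `G₂` with chosen white vertices
`w₁ ∈ G₁`, `w₂ ∈ G₂`, producing `G'`: a new black vertex `b` and a new terminal white
vertex `w` of genus `0` are added, together with three new edges of label `1` joining
`b` to `w₁`, to `w₂` and to `w`. -/
def O1StarAt (G₁ G₂ G' : LGraph) (w₁ w₂ : ℕ) : Prop :=
  DisjGraphs G₁ G₂ ∧ w₁ ∈ G₁.whites ∧ w₂ ∈ G₂.whites ∧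
  ∃ (b w f₀ f₁ f₂ : ℕ),
    b ∉ G₁.Verts ∪ G₂.Verts ∧ w ∉ G₁.Verts ∪ G₂.Verts ∧ b ≠ w ∧
    f₀ ∉ G₁.edges ∪ G₂.edges ∧ f₁ ∉ G₁.edges ∪ G₂.edges ∧ f₂ ∉ G₁.edges ∪ G₂.edges ∧
    f₀ ≠ f₁ ∧ f₀ ≠ f₂ ∧ f₁ ≠ f₂ ∧
    G'.blacks = insert b (G₁.blacks ∪ G₂.blacks) ∧
    G'.whites = insert w (G₁.whites ∪ G₂.whites) ∧
    G'.edges = insert f₀ (insert f₁ (insert f₂ (G₁.edges ∪ G₂.edges))) ∧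
    (∀ e ∈ G₁.edges, G'.bEnd e = G₁.bEnd e ∧ G'.wEnd e = G₁.wEnd e ∧ G'.label e = G₁.label e) ∧
    (∀ e ∈ G₂.edges, G'.bEnd e = G₂.bEnd e ∧ G'.wEnd e = G₂.wEnd e ∧ G'.label e = G₂.label e) ∧
    G'.bEnd f₀ = b ∧ G'.wEnd f₀ = w₁ ∧ G'.label f₀ = 1 ∧
    G'.bEnd f₁ = b ∧ G'.wEnd f₁ = w₂ ∧ G'.label f₁ = 1 ∧
    G'.bEnd f₂ = b ∧ G'.wEnd f₂ = w ∧ G'.label f₂ = 1 ∧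
    (∀ v ∈ G₁.whites, G'.genus v = G₁.genus v) ∧
    (∀ v ∈ G₂.whites, G'.genus v = G₂.genus v) ∧
    G'.genus w = 0

end LGraph

open LGraph

/-- `𝒢`: the smallest class of labeled graphs containing the graph consisting of a single
white vertex of genus `0` and closed under operations `O1`, `O2` (at any white vertex of
a member) and `O1*` (joining any two disjoint members at any white vertices). -/
inductive InG : LGraph → Prop
  | single (G : LGraph) (w : ℕ) : IsSingleWhite G w → InG G
  | o1 (G G' : LGraph) (w : ℕ) : InG G → O1At G G' w → InG G'
  | o2 (G G' : LGraph) (w : ℕ) : InG G → O2At G G' w → InG G'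
  | o1star (G₁ G₂ G' : LGraph) (w₁ w₂ : ℕ) :
      InG G₁ → InG G₂ → O1StarAt G₁ G₂ G' w₁ w₂ → InG G'

namespace LGraph

/-- The induced labeled subgraph on a set `S` of vertices. -/
def induce (G : LGraph) (S : Finset ℕ) : LGraph where
  blacks := G.blacks ∩ S
  whites := G.whites ∩ S
  edges := G.edges.filter fun e => G.bEnd e ∈ S ∧ G.wEnd e ∈ S
  bEnd := G.bEnd
  wEnd := G.wEnd
  label := G.label
  genus := G.genus
  disj := G.disj.mono Finset.inter_subset_left Finset.inter_subset_left
  bEnd_mem := fun e he => by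
    rw [Finset.mem_filter] at he
    exact Finset.mem_inter.2 ⟨G.bEnd_mem e he.1, he.2.1⟩
  wEnd_mem := fun e he => by
    rw [Finset.mem_filter] at he
    exact Finset.mem_inter.2 ⟨G.wEnd_mem e he.1, he.2.2⟩
  label_pos := fun e he => G.label_pos e (Finset.mem_filter.1 he).1

/-- `B`: the set of black vertices of degree `3`. -/
def bigB (G : LGraph) : Finset ℕ := G.blacks.filter fun b => G.deg b = 3

/-- `Γ − st(B)`: the graph obtained by removing the black vertices of degree `3`
together with all edges incident to them. -/
def minusStB (G : LGraph) : LGraph := G.induce (G.Verts \ G.bigB)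

/-- `St(B)`: the closed star of the set `B` of black vertices of degree `3`, i.e. the
vertices of `B`, the edges incident to them, and the white endpoints of those edges. -/
def closedStar (G : LGraph) : LGraph where
  blacks := G.bigB
  whites := G.whites.filter fun w => ∃ e ∈ G.edges, G.bEnd e ∈ G.bigB ∧ G.wEnd e = w
  edges := G.edges.filter fun e => G.bEnd e ∈ G.bigB
  bEnd := G.bEnd
  wEnd := G.wEnd
  label := G.label
  genus := G.genus
  disj := G.disj.mono (Finset.filter_subset _ _) (Finset.filter_subset _ _)
  bEnd_mem := fun e he => (Finset.mem_filter.1 he).2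
  wEnd_mem := fun e he => by
    rw [Finset.mem_filter] at he
    exact Finset.mem_filter.2
      ⟨G.wEnd_mem e he.1, ⟨e, he.1, he.2, rfl⟩⟩
  label_pos := fun e he => G.label_pos e (Finset.mem_filter.1 he).1

open Classical in
/-- The connected component of a vertex `v` in `G`, as a labeled graph. -/
noncomputable def component (G : LGraph) (v : ℕ) : LGraph :=
  G.induce (G.Verts.filter fun u => G.Reach u v)

/-- `C` is a `(2,1)`-collapsible tree with root `r`: it is obtained from the labeled
graph consisting of the single white vertex `r` of genus `0` by repeatedly attaching,
at a white vertex `u`, a new black vertex `b` joined to `u` by an edge of label `2` and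
to a new terminal white vertex by an edge of label `1` (i.e. by repeatedly performing
operation `O2`).  This is exactly the barycentric subdivision of a tree rooted at `r`,
with barycenters colored black, an edge labeled `2` precisely when its distance to the
root is even, and `1` when it is odd. -/
def IsCollapsible (C : LGraph) (r : ℕ) : Prop :=
  ∃ C₀ : LGraph, IsSingleWhite C₀ r ∧ Relation.ReflTransGen O2Step C₀ C

open Classical in
/-- The white vertices of `St(B)` that are not the root of the `(2,1)`-collapsible
component of `Γ − st(B)` containing them. -/
noncomputable def notRootWhites (G : LGraph) : Finset ℕ :=
  G.closedStar.whites.filter fun w => ¬ IsCollapsible ((G.minusStB).component w) w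

/-- `R` is the reduced graph `R(G)`: it is obtained from the closed star `St(B)` by
attaching to each white vertex `w` of `St(B)` that is not a root a `b12`-tree, i.e. a
new black vertex joined to `w` by an edge of label `1` and to a new terminal white
vertex of genus `0` by an edge of label `2`. -/
def IsReduced (G R : LGraph) : Prop :=
  ∃ nb nw ne₁ ne₂ : ℕ → ℕ,
    (∀ w ∈ G.notRootWhites,
      nb w ∉ G.Verts ∧ nw w ∉ G.Verts ∧ nb w ≠ nw w ∧
      ne₁ w ∉ G.edges ∧ ne₂ w ∉ G.edges ∧ ne₁ w ≠ ne₂ w) ∧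
    (∀ w ∈ G.notRootWhites, ∀ w' ∈ G.notRootWhites, w ≠ w' →
      nb w ≠ nb w' ∧ nb w ≠ nw w' ∧ nw w ≠ nw w' ∧
      ne₁ w ≠ ne₁ w' ∧ ne₁ w ≠ ne₂ w' ∧ ne₂ w ≠ ne₂ w') ∧
    R.blacks = G.closedStar.blacks ∪ G.notRootWhites.image nb ∧
    R.whites = G.closedStar.whites ∪ G.notRootWhites.image nw ∧
    R.edges = G.closedStar.edges ∪ G.notRootWhites.image ne₁ ∪ G.notRootWhites.image ne₂ ∧
    (∀ e ∈ G.closedStar.edges, R.bEnd e = G.bEnd e ∧ R.wEnd e = G.wEnd e ∧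
      R.label e = G.label e) ∧
    (∀ w ∈ G.closedStar.whites, R.genus w = G.genus w) ∧
    (∀ w ∈ G.notRootWhites,
      R.bEnd (ne₁ w) = nb w ∧ R.wEnd (ne₁ w) = w ∧ R.label (ne₁ w) = 1 ∧
      R.bEnd (ne₂ w) = nb w ∧ R.wEnd (ne₂ w) = nw w ∧ R.label (ne₂ w) = 2 ∧
      R.genus (nw w) = 0)

/-- `H` is a horned tree: the bicolored labeled tree obtained from a tree `T` with at
least two edges, all of whose nonterminal vertices have degree `3`, by coloring
degree-1 vertices white (genus `0`) and degree-3 vertices black, trisecting terminal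
edges and bisecting nonterminal edges (coloring the new vertices black exactly when
they neighbor a terminal vertex), and labeling terminal edges `2` and all other edges
`1`.  Equivalently (intrinsically): `H` is a tree with all whites of genus `0`; at
least one black vertex has degree `3`; every terminal vertex is white and its edge has
label `2`; every nonterminal white vertex has degree `2` with both incident labels `1`;
and every black vertex either has degree `3` with all incident labels `1`, or has
degree `2` with one incident edge of label `2` leading to a terminal white vertex and
the other of label `1`. -/
def IsHornedTree (H : LGraph) : Prop :=
  H.IsTree ∧ H.WhitesGenusZero ∧
  (∃ b ∈ H.blacks, H.deg b = 3) ∧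
  H.TerminalsWhite ∧
  (∀ w ∈ H.whites, H.deg w = 1 → ∀ e ∈ H.IncidentEdges w, H.label e = 2) ∧
  (∀ w ∈ H.whites, H.deg w ≠ 1 → H.deg w = 2 ∧ ∀ e ∈ H.IncidentEdges w, H.label e = 1) ∧
  (∀ b ∈ H.blacks,
    (H.deg b = 3 ∧ ∀ e ∈ H.IncidentEdges b, H.label e = 1) ∨
    (H.deg b = 2 ∧ ∃ e₁ ∈ H.IncidentEdges b, ∃ e₂ ∈ H.IncidentEdges b, e₁ ≠ e₂ ∧
      H.label e₁ = 2 ∧ H.label e₂ = 1 ∧ H.deg (H.wEnd e₁) = 1))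

/-- `H` is a (labeled bipartite) subgraph of `G`. -/
def IsSubgraph (H G : LGraph) : Prop :=
  H.blacks ⊆ G.blacks ∧ H.whites ⊆ G.whites ∧ H.edges ⊆ G.edges ∧
  (∀ e ∈ H.edges, H.bEnd e = G.bEnd e ∧ H.wEnd e = G.wEnd e ∧ H.label e = G.label e) ∧
  ∀ w ∈ H.whites, H.genus w = G.genus w

end LGraph

end Stratifold

open Stratifold Stratifold.LGraph

/-!
Suppose no terminal edge has label `1`. Trivalence then forces every label to be `1` or `2`,
so terminal edges have label `2`. A homomorphism `G(Γ) → ℤ/2` is an assignment `z` of values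
in `ℤ/2` to the black vertices such that, at every nonterminal white vertex, the values at the
ends of its label-`1` edges sum to `0`; the relators of terminal white vertices are squares.
Counting edges of the tree at their white ends shows that there are fewer nonterminal white
vertices than black ones, so this homogeneous system has a nonzero solution, and `G(Γ)` maps
onto `ℤ/2`.
-/

open Finset

theorem exists_ne_zero_forall_linearMap_eq_zero {ι κ K : Type*} [Field K] {S : Finset ι}
    {T : Finset κ} (hTS : #T < #S) (φ : κ → (ι → K) →ₗ[K] K) :
    ∃ z : ι → K, (∃ i ∈ S, z i ≠ 0) ∧ ∀ t ∈ T, φ t z = 0 := by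
  let extend : (S → K) →ₗ[K] ι → K := Function.ExtendByZero.linearMap K Subtype.val
  let F : (S → K) →ₗ[K] T → K := LinearMap.pi fun t => (φ t).comp extend
  have hker : LinearMap.ker F ≠ ⊥ :=
    LinearMap.ker_ne_bot_of_finrank_lt (by simpa [Module.finrank_fintype_fun_eq_card] using hTS)
  obtain ⟨x, hxF, hx⟩ := Submodule.exists_mem_ne_zero_of_ne_bot hker
  obtain ⟨i, hi⟩ := Function.ne_iff.mp hx
  refine ⟨extend x, ⟨i, i.2, ?_⟩, fun t ht => congrFun hxF ⟨t, ht⟩⟩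
  simpa [extend, Subtype.val_injective.extend_apply] using hi

namespace Stratifold.LGraph

theorem Connected.deg_pos {G : LGraph} (hG : G.Connected) {u v : ℕ} (hu : u ∈ G.Verts)
    (hv : v ∈ G.Verts) (huv : u ≠ v) : 0 < G.deg v := by
  obtain rfl | ⟨c, ⟨e, he, hends⟩, -⟩ := Relation.ReflTransGen.cases_head (hG.2 v hv u hu)
  · exact absurd rfl huv
  · exact card_pos.mpr ⟨e, mem_filter.mpr ⟨he, hends.elim (Or.inl ·.1) (Or.inr ·.2)⟩⟩

variable (G : LGraph)

theorem incidentEdges_of_mem_whites {w : ℕ} (hw : w ∈ G.whites) :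
    G.IncidentEdges w = G.edges.filter fun e => G.wEnd e = w :=
  filter_congr fun e he => or_iff_right fun h =>
    disjoint_left.mp G.disj (h ▸ G.bEnd_mem e he) hw

theorem card_edges_eq_sum_deg_whites : #G.edges = ∑ w ∈ G.whites, G.deg w := by
  rw [card_eq_sum_card_fiberwise G.wEnd_mem]
  exact sum_congr rfl fun w hw => by rw [deg, G.incidentEdges_of_mem_whites hw]

theorem card_nonterminal_whites_lt_card_blacks (hG : G.IsTree) (hB : G.blacks.Nonempty) :
    #(G.whites.filter fun w => G.deg w ≠ 1) < #G.blacks := by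
  obtain ⟨b, hb⟩ := hB
  have hdeg : ∀ w ∈ G.whites, (if G.deg w = 1 then 1 else 2) ≤ G.deg w := fun w hw => by
    have := hG.1.deg_pos (mem_union_left _ hb) (mem_union_right _ hw)
      fun h => disjoint_left.mp G.disj hb (h ▸ hw)
    split_ifs <;> omega
  have hsum := sum_le_sum hdeg
  rw [sum_ite, sum_const, sum_const, smul_eq_mul, smul_eq_mul, ← card_edges_eq_sum_deg_whites]
    at hsum
  have hsplit := card_filter_add_card_filter_not (s := G.whites) fun w => G.deg w = 1
  simp only [← ne_eq] at hsum hsplit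
  have hcard := hG.2
  rw [Verts, card_union_of_disjoint G.disj] at hcard
  omega

theorem label_le_two (hTri : G.Trivalent) (hTerm : G.TerminalsWhite) {e : ℕ}
    (he : e ∈ G.edges) : G.label e ≤ 2 := by
  have heb : e ∈ G.IncidentEdges (G.bEnd e) := mem_filter.mpr ⟨he, Or.inl rfl⟩
  have hdeg : 1 < G.deg (G.bEnd e) := by
    have := hTerm _ (G.bEnd_mem e he)
    have := card_pos.mpr ⟨e, heb⟩
    rw [deg] at *
    omega
  obtain ⟨e', he', hne⟩ := exists_mem_ne hdeg e
  have hpair : G.label e' + G.label e ≤ 3 := by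
    rw [← hTri _ (G.bEnd_mem e he), ← sum_pair hne]
    exact sum_le_sum_of_subset (insert_subset he' (singleton_subset_iff.mpr heb))
  have := G.label_pos e' (mem_filter.mp he').1
  omega

/-- The relator of `w` written additively, as a linear form in the values of the generators:
its image under the map to an abelian group sending each generator `b` to `z b`. -/
def relatorForm (R : Type*) [Semiring R] (w : ℕ) : (ℕ → R) →ₗ[R] R :=
  ∑ e ∈ G.edges.filter (fun e => G.wEnd e = w), G.label e • LinearMap.proj (G.bEnd e)

theorem relatorForm_apply {R : Type*} [Semiring R] (w : ℕ) (z : ℕ → R) :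
    G.relatorForm R w z =
      ∑ e ∈ G.edges.filter (fun e => G.wEnd e = w), G.label e • z (G.bEnd e) := by
  simp [relatorForm, LinearMap.sum_apply]

theorem lift_relator {R : Type*} [Ring R] (z : ℕ → R) (w : ℕ) :
    FreeGroup.lift (fun b : {b // b ∈ G.blacks} => Multiplicative.ofAdd (z b)) (G.relator w) =
      Multiplicative.ofAdd (G.relatorForm R w z) := by
  rw [relator, map_list_prod, List.map_map, ← Multiset.prod_coe, ← Multiset.map_coe, sort_eq,
    relatorForm_apply, ofAdd_sum]
  refine prod_congr rfl fun e he => ?_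
  simp only [Function.comp_apply, dif_pos (G.bEnd_mem e (mem_filter.mp he).1), map_pow,
    FreeGroup.lift_apply_of, ofAdd_nsmul]

theorem eq_zero_of_forall_relatorForm_eq_zero {R : Type*} [Ring R] (hG : ∀ x : G.Grp, x = 1)
    {z : ℕ → R} (hz : ∀ w ∈ G.whites, G.relatorForm R w z = 0) {b : ℕ} (hb : b ∈ G.blacks) :
    z b = 0 := by
  have hrels : ∀ r ∈ G.rels,
      FreeGroup.lift (fun b : {b // b ∈ G.blacks} => Multiplicative.ofAdd (z b)) r = 1 := by
    rintro r ⟨w, hw, rfl⟩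
    rw [lift_relator, hz w hw, ofAdd_zero]
  have := PresentedGroup.toGroup.of hrels (x := ⟨b, hb⟩)
  rwa [← gen, hG (G.gen b hb), map_one, eq_comm, ofAdd_eq_one] at this

end Stratifold.LGraph

theorem exists_terminal_label_one_general (Γ : LGraph) (hBlack : Γ.blacks.Nonempty)
    (hTri : Γ.Trivalent) (hTree : Γ.IsTree)
    (hTerm : Γ.TerminalsWhite) (hTriv : ∀ x : Γ.Grp, x = 1) :
    ∃ v ∈ Γ.Verts, Γ.deg v = 1 ∧ ∃ e ∈ Γ.IncidentEdges v, Γ.label e = 1 := by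
  by_contra! hC
  obtain ⟨z, ⟨b, hb, hzb⟩, hz⟩ := exists_ne_zero_forall_linearMap_eq_zero
    (Γ.card_nonterminal_whites_lt_card_blacks hTree hBlack) (Γ.relatorForm (ZMod 2))
  refine hzb (Γ.eq_zero_of_forall_relatorForm_eq_zero hTriv (fun w hw => ?_) hb)
  by_cases hw1 : Γ.deg w = 1
  · rw [relatorForm_apply]
    refine sum_eq_zero fun e he => ?_
    have heE := (mem_filter.mp he).1
    have h2 : Γ.label e = 2 := by
      have := hC w (mem_union_right _ hw) hw1 e (Γ.incidentEdges_of_mem_whites hw ▸ he)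
      have := Γ.label_le_two hTri hTerm heE
      have := Γ.label_pos e heE
      omega
    rw [h2, two_nsmul, CharTwo.add_self_eq_zero]
  · exact hz w (mem_filter.mpr ⟨hw, hw1⟩)

/-- Let `Γ` be a trivalent labeled graph which is a tree with at least one black vertex,
all white vertices of genus `0`, and all terminal vertices white, whose associated group
`G(Γ)` is trivial.  Then `Γ` contains a terminal vertex whose incident edge has
label `1`. -/
theorem exists_terminal_label_one (Γ : LGraph) (hBlack : Γ.blacks.Nonempty)
    (hTri : Γ.Trivalent) (hTree : Γ.IsTree) (hGenus : Γ.WhitesGenusZero)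
    (hTerm : Γ.TerminalsWhite) (hTriv : ∀ x : Γ.Grp, x = 1) :
    ∃ v ∈ Γ.Verts, Γ.deg v = 1 ∧ ∃ e ∈ Γ.IncidentEdges v, Γ.label e = 1 :=
  exists_terminal_label_one_general Γ hBlack hTri hTree hTerm hTriv
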